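/- arXiv:1605.04505 — 2 statements merged into one kernel-verified Lean document; each statement's English description precedes it below -/
import Mathlib

section
/- Define B(m) = (m/22)(9t_m − t_{m−1} − 5t_{m−2}) + (1/44)(−81t_m + 26t_{m−1} + 13t_{m−2}) + m + 1/4. Then B(m) is a nonnegative integer for every m ≥ 3, i.e. 44·B(m) is divisible by 44 and B(m) ∈ ℤ_{≥0}. -/
/-- Tribonacci numbers shifted by 2: `trib n` is `t_{n-2}`, so
`trib 0 = t₋₂ = 0`, `trib 1 = t₋₁ = 1`, `trib 2 = t₀ = 1`,
`trib 3 = t₁ = 2`, `trib 4 = t₂ = 4`. -/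
def trib : ℕ → ℤ
  | 0 => 0
  | 1 => 1
  | 2 => 1
  | n + 3 => trib (n + 2) + trib (n + 1) + trib n

/-- `tq m` is the Tribonacci number `t_m` as a rational number. -/
def tq (m : ℕ) : ℚ := (trib (m + 2) : ℚ)

/-- The Mousavi–Shallit count `A(t_m)`. -/
def B (m : ℕ) : ℚ :=
  ((m : ℚ) / 22) * (9 * tq m - tq (m - 1) - 5 * tq (m - 2)) +
  (1 / 44) * (-81 * tq m + 26 * tq (m - 1) + 13 * tq (m - 2)) + (m : ℚ) + 1 / 4

/-- Auxiliary integer sequence: `D k = 2 * B (k + 3)`. -/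
def D : ℕ → ℤ
  | 0 => 0
  | 1 => 4
  | 2 => 18
  | k + 3 => D (k + 2) + D (k + 1) + D k +
      5 * trib (k + 5) + 2 * trib (k + 4) + trib (k + 3) - 4 * k - 13

lemma trib_nonneg : ∀ n, 0 ≤ trib n := by
  intro n
  induction n using Nat.strong_induction_on with
  | _ n ih =>
    match n with
    | 0 => simp [trib]
    | 1 => simp [trib]
    | 2 => simp [trib]
    | k + 3 =>
      have h1 := ih (k + 2) (by omega)
      have h2 := ih (k + 1) (by omega)
      have h3 := ih k (by omega)
      simp only [trib]; omega

lemma trib_ge_one : ∀ n, 1 ≤ trib (n + 1) := by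
  intro n
  induction n using Nat.strong_induction_on with
  | _ n ih =>
    match n with
    | 0 => simp [trib]
    | 1 => simp [trib]
    | k + 2 =>
      have h1 : 1 ≤ trib (k + 2) := ih (k + 1) (by omega)
      have h2 : 1 ≤ trib (k + 1) := ih k (by omega)
      have h3 := trib_nonneg k
      show 1 ≤ trib (k + 3)
      simp only [trib]; omega

lemma trib_ge : ∀ n : ℕ, (n : ℤ) ≤ trib (n + 2) := by
  intro n
  induction n using Nat.strong_induction_on with
  | _ n ih =>
    match n with
    | 0 => simp [trib]
    | k + 1 =>
      have h1 : (k : ℤ) ≤ trib (k + 2) := ih k (by omega)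
      have h2 : 1 ≤ trib (k + 1) := trib_ge_one k
      have h3 := trib_nonneg k
      show ((k : ℤ) + 1) ≤ trib (k + 3)
      simp only [trib]
      omega

/-- Parity: `trib m + trib (m+2)` is always odd. -/
lemma trib_parity : ∀ m, (trib m + trib (m + 2)) % 2 = 1 := by
  intro m
  induction m using Nat.strong_induction_on with
  | _ m ih =>
    match m with
    | 0 => simp [trib]
    | 1 => simp [trib]
    | 2 => simp [trib]
    | k + 3 =>
      have h1 := ih k (by omega)
      have h2 := ih (k + 1) (by omega)
      have h3 := ih (k + 2) (by omega)
      show (trib (k + 3) + trib (k + 5)) % 2 = 1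
      have e5 : trib (k + 5) = trib (k + 4) + trib (k + 3) + trib (k + 2) := rfl
      have e4 : trib (k + 4) = trib (k + 3) + trib (k + 2) + trib (k + 1) := rfl
      have e3 : trib (k + 3) = trib (k + 2) + trib (k + 1) + trib k := rfl
      omega

lemma D_even : ∀ k, 2 ∣ D k := by
  intro k
  induction k using Nat.strong_induction_on with
  | _ k ih =>
    match k with
    | 0 => decide
    | 1 => decide
    | 2 => decide
    | j + 3 =>
      have h1 := ih j (by omega)
      have h2 := ih (j + 1) (by omega)
      have h3 := ih (j + 2) (by omega)
      have hp : (trib (j + 3) + trib (j + 5)) % 2 = 1 := trib_parity (j + 3)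
      show 2 ∣ (D (j + 2) + D (j + 1) + D j +
        5 * trib (j + 5) + 2 * trib (j + 4) + trib (j + 3) - 4 * j - 13)
      omega

lemma D_nonneg : ∀ k, 0 ≤ D k := by
  intro k
  induction k using Nat.strong_induction_on with
  | _ k ih =>
    match k with
    | 0 => decide
    | 1 => decide
    | 2 => decide
    | j + 3 =>
      have h1 := ih j (by omega)
      have h2 := ih (j + 1) (by omega)
      have h3 := ih (j + 2) (by omega)
      have hg : ((j : ℤ) + 3) ≤ trib (j + 5) := by
        have := trib_ge (j + 3); push_cast at this; exact this
      have hn4 := trib_nonneg (j + 4)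
      have hn3 := trib_nonneg (j + 3)
      show 0 ≤ (D (j + 2) + D (j + 1) + D j +
        5 * trib (j + 5) + 2 * trib (j + 4) + trib (j + 3) - 4 * j - 13)
      omega

lemma tq_rec (m : ℕ) : tq (m + 3) = tq (m + 2) + tq (m + 1) + tq m := by
  show (trib (m + 5) : ℚ) = (trib (m + 4) : ℚ) + (trib (m + 3) : ℚ) + (trib (m + 2) : ℚ)
  have : trib (m + 5) = trib (m + 4) + trib (m + 3) + trib (m + 2) := rfl
  rw [this]; push_cast; ring

lemma B_val (k : ℕ) : B (k + 3) =
    ((k : ℚ) + 3) / 22 * (9 * tq (k + 3) - tq (k + 2) - 5 * tq (k + 1)) +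
    (1 / 44) * (-81 * tq (k + 3) + 26 * tq (k + 2) + 13 * tq (k + 1)) + ((k : ℚ) + 3) + 1 / 4 := by
  have h1 : k + 3 - 1 = k + 2 := by omega
  have h2 : k + 3 - 2 = k + 1 := by omega
  rw [B, h1, h2]
  push_cast
  ring

lemma B_step (k : ℕ) : B (k + 6) = B (k + 5) + B (k + 4) + B (k + 3) +
    (5 * tq (k + 3) + 2 * tq (k + 2) + tq (k + 1) - 4 * (k : ℚ) - 13) / 2 := by
  have e3 := B_val k
  have e4 := B_val (k + 1)
  have e5 := B_val (k + 2)
  have e6 := B_val (k + 3)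
  have r4 := tq_rec (k + 1)
  have r5 := tq_rec (k + 2)
  have r6 := tq_rec (k + 3)
  push_cast at e4 e5 e6 r4 r5 r6
  rw [show k + 1 + 3 = k + 4 from rfl] at e4
  rw [show k + 2 + 3 = k + 5 from rfl] at e5
  rw [show k + 3 + 3 = k + 6 from rfl] at e6
  rw [show k + 1 + 3 = k + 4 from rfl, show k + 1 + 2 = k + 3 from rfl] at r4
  rw [show k + 2 + 3 = k + 5 from rfl, show k + 2 + 2 = k + 4 from rfl, show k + 2 + 1 = k + 3 from rfl] at r5
  rw [show k + 3 + 3 = k + 6 from rfl, show k + 3 + 2 = k + 5 from rfl, show k + 3 + 1 = k + 4 from rfl] at r6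
  rw [e3, e4, e5, e6, r6, r5, r4]
  ring

lemma B_eq_D : ∀ k, B (k + 3) = (D k : ℚ) / 2 := by
  have key : ∀ k, B (k + 3) = (D k : ℚ) / 2 ∧ B (k + 4) = (D (k + 1) : ℚ) / 2 ∧
      B (k + 5) = (D (k + 2) : ℚ) / 2 := by
    intro k
    induction k with
    | zero =>
      refine ⟨?_, ?_, ?_⟩ <;>
        · show B _ = _
          rw [B]
          norm_num [tq, trib, D]
    | succ j ih =>
      obtain ⟨h0, h1, h2⟩ := ih
      refine ⟨h1, h2, ?_⟩
      have hs := B_step j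
      rw [show j + 1 + 5 = j + 6 from rfl, hs, h0, h1, h2]
      rw [show j + 1 + 2 = j + 3 from rfl,
        show D (j + 3) = D (j + 2) + D (j + 1) + D j +
          5 * trib (j + 5) + 2 * trib (j + 4) + trib (j + 3) - 4 * j - 13 from rfl]
      show _ + _ + _ + (5 * (trib (j + 5) : ℚ) + 2 * (trib (j + 4) : ℚ) + (trib (j + 3) : ℚ)
        - 4 * (j : ℚ) - 13) / 2 = _
      push_cast
      ring
  exact fun k => (key k).1

theorem B_nonneg_integer (m : ℕ) (hm : 3 ≤ m) : ∃ n : ℕ, B m = (n : ℚ) := by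
  obtain ⟨k, rfl⟩ : ∃ k, m = k + 3 := ⟨m - 3, by omega⟩
  obtain ⟨j, hj⟩ := D_even k
  have hnn := D_nonneg k
  refine ⟨j.toNat, ?_⟩
  rw [B_eq_D k, hj]
  have hj0 : 0 ≤ j := by omega
  have ht : ((j.toNat : ℕ) : ℚ) = (j : ℚ) := by exact_mod_cast Int.toNat_of_nonneg hj0
  rw [ht]
  push_cast
  ring
end

section
/- For all m ≥ 6, θ_m^5 < η_m^2 ≤ θ_m^6, where θ_m^5 = (3t_m − 5t_{m−2} − 1)/2, η_m^2 = 2t_{m−1} − t_{m−2}, and θ_m^6 = (3t_m − 2t_{m−1} − t_{m−2} − 1)/2. -/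
lemma trib_rec (k : ℕ) : trib (k + 3) = trib (k + 2) + trib (k + 1) + trib k := rfl

lemma trib_aux : ∀ n, 0 ≤ trib n ∧ 1 ≤ trib (n + 1) ∧ 1 ≤ trib (n + 2) := by
  intro n
  induction n with
  | zero => norm_num [trib]
  | succ k ih =>
    refine ⟨le_trans zero_le_one ih.2.1, ih.2.2, ?_⟩
    rw [show k + 1 + 2 = k + 3 from rfl, trib_rec]
    linarith [ih.1, ih.2.1, ih.2.2]

theorem theta5_lt_eta2_le_theta6 (m : ℕ) (hm : 6 ≤ m) :
    (3 * tq m - 5 * tq (m - 2) - 1) / 2 < 2 * tq (m - 1) - tq (m - 2) ∧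
    2 * tq (m - 1) - tq (m - 2) ≤ (3 * tq m - 2 * tq (m - 1) - tq (m - 2) - 1) / 2 := by
  obtain ⟨n, rfl⟩ := Nat.exists_eq_add_of_le hm
  have h1 : 6 + n - 1 = n + 5 := by omega
  have h2 : 6 + n - 2 = n + 4 := by omega
  have h3 : 6 + n + 2 = n + 8 := by omega
  rw [h1, h2]
  have e8 : trib (n + 8) = 13 * trib n + 20 * trib (n + 1) + 24 * trib (n + 2) := by
    rw [show n + 8 = n + 5 + 3 from rfl, trib_rec, show n + 7 = n + 4 + 3 from rfl,
      trib_rec, show n + 6 = n + 3 + 3 from rfl, trib_rec, show n + 5 = n + 2 + 3 from rfl,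
      trib_rec, show n + 4 = n + 1 + 3 from rfl, trib_rec, show n + 3 = n + 3 from rfl,
      trib_rec]
    ring
  have e7 : trib (n + 7) = 7 * trib n + 11 * trib (n + 1) + 13 * trib (n + 2) := by
    rw [show n + 7 = n + 4 + 3 from rfl, trib_rec, show n + 6 = n + 3 + 3 from rfl, trib_rec,
      show n + 5 = n + 2 + 3 from rfl, trib_rec, show n + 4 = n + 1 + 3 from rfl, trib_rec,
      trib_rec]
    ring
  have e6 : trib (n + 6) = 4 * trib n + 6 * trib (n + 1) + 7 * trib (n + 2) := by
    rw [show n + 6 = n + 3 + 3 from rfl, trib_rec, show n + 5 = n + 2 + 3 from rfl, trib_rec,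
      show n + 4 = n + 1 + 3 from rfl, trib_rec, trib_rec]
    ring
  have hx := trib_aux n
  have hxq : (0:ℚ) ≤ (trib n : ℚ) := by exact_mod_cast hx.1
  have hyq : (1:ℚ) ≤ (trib (n+1) : ℚ) := by exact_mod_cast hx.2.1
  have hzq : (1:ℚ) ≤ (trib (n+2) : ℚ) := by exact_mod_cast hx.2.2
  simp only [tq, h3, show n + 5 + 2 = n + 7 from rfl, show n + 4 + 2 = n + 6 from rfl,
    e8, e7, e6]
  push_cast
  constructor <;> [linarith; linarith]
end
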